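/- Let v^n denote the alternating word of length n over {L,R} beginning with L (v^n = LRLR⋯, with v^0 = ε the empty word). Then D²[P_{v^n}] = 2n/3 + 8/9 + (−1)^n/(9·2^n) for every n ∈ ℕ, and for every word w of length n over {L,R}, D²[P_w] ≤ D²[P_{v^n}]. -/

import Mathlib

/-- The probability mass functions `P t` on ℤ, defined by
`P 1 = δ₀`, `P (2t) = P t`, `P (2t+1) d = ½ P (t+1) (d+1) + ½ P t (d-1)`. -/
noncomputable def P : ℕ → ℤ → ℝ
  | 0, _ => 0
  | 1, d => if d = 0 then 1 else 0
  | (n+2), d =>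
      if h : (n + 2) % 2 = 0 then P ((n+2)/2) d
      else (1/2) * P ((n+2)/2 + 1) (d+1) + (1/2) * P ((n+2)/2) (d-1)
  decreasing_by all_goals omega

/-- Letters of the alphabet. -/
inductive LR | L | R
deriving DecidableEq

/-- One step of the identification of words with odd integers: `L : t ↦ 2t-1`, `R : t ↦ 2t+1`. -/
def LRstep (t : ℕ) : LR → ℕ
  | LR.L => 2 * t - 1
  | LR.R => 2 * t + 1

/-- The odd integer associated to a word over `{L,R}`, starting from 3. -/
def hword (w : List LR) : ℕ := w.foldl LRstep 3

/-- The variance `D²[p] = ∑ k² p(k)` of a mean-zero probability mass function on ℤ. -/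
noncomputable def var (p : ℤ → ℝ) : ℝ := ∑' k : ℤ, (k : ℝ) ^ 2 * p k

/-- The alternating word `v^n = LRLR⋯` of length `n` (with `v^0 = ε`). -/
def altWord (n : ℕ) : List LR :=
  (List.range n).map fun i => if i % 2 = 0 then LR.L else LR.R

/-
Write `h(w) = 2s + 1`. Since `P_{2s+1}` is the even mixture of `P_{s+1}` shifted by `-1` and
`P_s` shifted by `+1`, all of mass one and mean zero,
`D²[P_{2s+1}] = (D²[P_s] + D²[P_{s+1}])/2 + 1`, while `D²[P_{2s}] = D²[P_s]`. Appending `L` or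
`R` to `w` sends `s` to `2s` or `2s + 1`, so the pair `(D²[P_s], D²[P_{s+1}])` evolves by
`(a, b) ↦ (a, m)` or `(m, b)` with `m = (a + b)/2 + 1`. For words of length `n` both entries are
therefore at most `maxVar (n + 1)` and their sum at most `maxVar n + maxVar (n + 1)`, where
`maxVar` runs the same averaging recursion on the largest possible entries. The alternating word
always replaces the smaller entry, so it attains the bound on the sum.
-/

lemma P_one (d : ℤ) : P 1 d = if d = 0 then 1 else 0 := by simp [P]

lemma P_two_mul {s : ℕ} (hs : 1 ≤ s) : P (2 * s) = P s := by
  obtain ⟨m, rfl⟩ := Nat.exists_eq_add_of_le hs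
  funext d
  rw [show 2 * (1 + m) = 2 * m + 2 by ring, P, dif_pos (by omega)]
  congr 1
  omega

lemma P_two_mul_add_one {s : ℕ} (hs : 1 ≤ s) (d : ℤ) :
    P (2 * s + 1) d = P (s + 1) (d + 1) / 2 + P s (d - 1) / 2 := by
  obtain ⟨m, rfl⟩ := Nat.exists_eq_add_of_le hs
  rw [show 2 * (1 + m) + 1 = 2 * m + 1 + 2 by ring, P, dif_neg (by omega),
    show (2 * m + 1 + 2) / 2 = 1 + m by omega]
  ring

lemma induction_by_halving {motive : (t : ℕ) → 1 ≤ t → Prop} (one : motive 1 le_rfl)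
    (even : ∀ s hs, motive s hs → motive (2 * s) (by omega))
    (odd : ∀ s hs, motive s hs → motive (s + 1) (by omega) → motive (2 * s + 1) (by omega))
    (t : ℕ) (ht : 1 ≤ t) : motive t ht := by
  induction t using Nat.strong_induction_on with
  | _ t ih =>
    obtain rfl | ht' := ht.eq_or_lt
    · exact one
    obtain ⟨s, rfl | rfl⟩ := Nat.even_or_odd' t
    · exact even s (by omega) (ih s (by omega) _)
    · exact odd s (by omega) (ih s (by omega) _) (ih (s + 1) (by omega) _)

lemma P_eq_zero_of_lt_natAbs (t : ℕ) (d : ℤ) (h : t < d.natAbs) : P t d = 0 := by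
  rcases Nat.eq_zero_or_pos t with rfl | ht
  · simp [P]
  induction t, ht using induction_by_halving generalizing d with
  | one => rw [P_one, if_neg (by omega)]
  | even s hs ih => rw [P_two_mul hs, ih d (by omega)]
  | odd s hs ih ih' =>
    rw [P_two_mul_add_one hs, ih' _ (by omega), ih _ (by omega)]
    simp

lemma summable_mul_P_add (t : ℕ) (g : ℤ → ℝ) (c : ℤ) :
    Summable fun d : ℤ => g d * P t (d + c) := by
  refine summable_of_ne_finset_zero (s := Finset.Icc (-(t : ℤ) - c.natAbs) (t + c.natAbs))
    fun d hd => ?_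
  rw [Finset.mem_Icc] at hd
  rw [P_eq_zero_of_lt_natAbs t _ (by omega), mul_zero]

lemma summable_mul_P (t : ℕ) (g : ℤ → ℝ) : Summable fun d : ℤ => g d * P t d := by
  simpa using summable_mul_P_add t g 0

noncomputable def expect (t : ℕ) (g : ℤ → ℝ) : ℝ := ∑' d : ℤ, g d * P t d

section expect

variable {t : ℕ}

lemma expect_add (f g : ℤ → ℝ) : expect t (fun d => f d + g d) = expect t f + expect t g := by
  simp only [expect, add_mul]
  exact (summable_mul_P t f).tsum_add (summable_mul_P t g)

lemma expect_const_mul (c : ℝ) (f : ℤ → ℝ) :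
    expect t (fun d => c * f d) = c * expect t f := by
  simp only [expect, mul_assoc, tsum_mul_left]

lemma expect_two_mul {s : ℕ} (hs : 1 ≤ s) (g : ℤ → ℝ) :
    expect (2 * s) g = expect s g := by
  rw [expect, P_two_mul hs, expect]

lemma expect_two_mul_add_one {s : ℕ} (hs : 1 ≤ s) (g : ℤ → ℝ) :
    expect (2 * s + 1) g
      = (expect (s + 1) (fun d => g (d - 1)) + expect s (fun d => g (d + 1))) / 2 := by
  have left : ∑' d : ℤ, g d * P (s + 1) (d + 1) = expect (s + 1) (fun d => g (d - 1)) := by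
    rw [expect, ← (Equiv.addRight (1 : ℤ)).tsum_eq (fun d => g (d - 1) * P (s + 1) d)]
    simp
  have right : ∑' d : ℤ, g d * P s (d + -1) = expect s (fun d => g (d + 1)) := by
    rw [expect, ← (Equiv.subRight (1 : ℤ)).tsum_eq (fun d => g (d + 1) * P s d)]
    simp [sub_eq_add_neg]
  calc expect (2 * s + 1) g
      = ∑' d : ℤ, (g d * P (s + 1) (d + 1) / 2 + g d * P s (d + -1) / 2) := by
        simp only [expect, P_two_mul_add_one hs, sub_eq_add_neg]
        ring_nf
    _ = _ := by
        rw [((summable_mul_P_add (s + 1) g 1).div_const 2).tsum_add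
          ((summable_mul_P_add s g (-1)).div_const 2), tsum_div_const, tsum_div_const, left, right]
        ring

lemma expect_one (ht : 1 ≤ t) : expect t (fun _ => 1) = 1 := by
  induction t, ht using induction_by_halving with
  | one =>
    simp only [expect, P_one, one_mul]
    exact tsum_ite_eq 0 1
  | even s hs ih => rw [expect_two_mul hs, ih]
  | odd s hs ih ih' =>
    rw [expect_two_mul_add_one hs, ih, ih']
    norm_num

lemma expect_add_const (ht : 1 ≤ t) (c : ℝ) :
    expect t (fun d => (d : ℝ) + c) = expect t (fun d => (d : ℝ)) + c := by
  rw [expect_add, show (fun _ : ℤ => c) = fun _ => c * 1 by simp, expect_const_mul,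
    expect_one ht, mul_one]

lemma expect_id (ht : 1 ≤ t) : expect t (fun d => (d : ℝ)) = 0 := by
  induction t, ht using induction_by_halving with
  | one => simp [expect, P_one]
  | even s hs ih => rw [expect_two_mul hs, ih]
  | odd s hs ih ih' =>
    rw [expect_two_mul_add_one hs]
    push_cast
    simp only [sub_eq_add_neg]
    rw [expect_add_const (by omega), expect_add_const hs, ih, ih']
    norm_num

lemma var_P_eq_expect (t : ℕ) : var (P t) = expect t fun d => (d : ℝ) ^ 2 := rfl

lemma expect_add_const_sq (ht : 1 ≤ t) (c : ℝ) :
    expect t (fun d => ((d : ℝ) + c) ^ 2) = var (P t) + c ^ 2 := by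
  have expand : (fun d : ℤ => ((d : ℝ) + c) ^ 2)
      = fun d : ℤ => (d : ℝ) ^ 2 + (2 * c * d + c ^ 2 * 1) := by
    funext d
    ring
  rw [expand, expect_add, expect_add, expect_const_mul, expect_const_mul, expect_id ht,
    expect_one ht, var_P_eq_expect]
  ring

end expect

lemma var_P_two_mul {s : ℕ} (hs : 1 ≤ s) : var (P (2 * s)) = var (P s) := by
  rw [P_two_mul hs]

lemma var_P_two_mul_add_one {s : ℕ} (hs : 1 ≤ s) :
    var (P (2 * s + 1)) = (var (P s) + var (P (s + 1))) / 2 + 1 := by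
  rw [var_P_eq_expect, expect_two_mul_add_one hs]
  push_cast
  simp only [sub_eq_add_neg]
  rw [expect_add_const_sq (by omega), expect_add_const_sq hs]
  ring

lemma var_P_one : var (P 1) = 0 := by
  simp [var_P_eq_expect, expect, P_one]

lemma var_P_two : var (P 2) = 0 := by
  rw [← var_P_one, ← var_P_two_mul le_rfl]

def indexStep (s : ℕ) : LR → ℕ
  | LR.L => 2 * s
  | LR.R => 2 * s + 1

/-- In binary, `wordIndex w` is `1` followed by the letters of `w` read as `L = 0`, `R = 1`. -/
def wordIndex (w : List LR) : ℕ := w.foldl indexStep 1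

lemma foldl_LRstep_two_mul_add_one (w : List LR) (s : ℕ) :
    w.foldl LRstep (2 * s + 1) = 2 * w.foldl indexStep s + 1 := by
  induction w generalizing s with
  | nil => rfl
  | cons c w ih =>
    cases c
    · simp only [List.foldl_cons, LRstep, indexStep]
      rw [← ih, show 2 * (2 * s + 1) - 1 = 2 * (2 * s) + 1 by omega]
    · simp only [List.foldl_cons, LRstep, indexStep, ← ih]

lemma hword_eq (w : List LR) : hword w = 2 * wordIndex w + 1 :=
  foldl_LRstep_two_mul_add_one w 1

lemma le_foldl_indexStep (w : List LR) (s : ℕ) : s ≤ w.foldl indexStep s := by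
  induction w generalizing s with
  | nil => rfl
  | cons c w ih => cases c <;> exact le_trans (by simp [indexStep]; omega) (ih _)

lemma one_le_wordIndex (w : List LR) : 1 ≤ wordIndex w :=
  le_foldl_indexStep w 1

lemma wordIndex_append_singleton (w : List LR) (c : LR) :
    wordIndex (w ++ [c]) = indexStep (wordIndex w) c := by
  simp [wordIndex]

lemma var_P_hword (w : List LR) :
    var (P (hword w)) = (var (P (wordIndex w)) + var (P (wordIndex w + 1))) / 2 + 1 := by
  rw [hword_eq, var_P_two_mul_add_one (one_le_wordIndex w)]

noncomputable def maxVar : ℕ → ℝ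
  | 0 => 0
  | 1 => 0
  | n + 2 => (maxVar n + maxVar (n + 1)) / 2 + 1

lemma maxVar_succ_succ (n : ℕ) : maxVar (n + 2) = (maxVar n + maxVar (n + 1)) / 2 + 1 := by
  rw [maxVar]

lemma maxVar_le_succ_and_succ_le_add_one (n : ℕ) :
    maxVar n ≤ maxVar (n + 1) ∧ maxVar (n + 1) ≤ maxVar n + 1 := by
  induction n with
  | zero => simp [maxVar]
  | succ n ih =>
    rw [maxVar_succ_succ]
    constructor <;> linarith

lemma maxVar_add_two (n : ℕ) :
    maxVar (n + 2) = 2 * n / 3 + 8 / 9 + (-1) ^ n / (9 * 2 ^ n) := by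
  induction n using Nat.twoStepInduction with
  | zero => norm_num [maxVar]
  | one => norm_num [maxVar]
  | more n ih ih' =>
    rw [maxVar_succ_succ, ih, ih']
    push_cast
    field_simp
    ring

lemma var_P_wordIndex_le (w : List LR) :
    var (P (wordIndex w)) ≤ maxVar (w.length + 1) ∧
      var (P (wordIndex w + 1)) ≤ maxVar (w.length + 1) ∧
      var (P (wordIndex w)) + var (P (wordIndex w + 1))
        ≤ maxVar w.length + maxVar (w.length + 1) := by
  induction w using List.reverseRecOn with
  | nil => simp [wordIndex, maxVar, var_P_one, var_P_two]
  | append_singleton w c ih =>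
    obtain ⟨ha, hb, hab⟩ := ih
    have hs := one_le_wordIndex w
    have hmono := (maxVar_le_succ_and_succ_le_add_one (w.length + 1)).1
    have hnext := maxVar_succ_succ w.length
    rw [wordIndex_append_singleton, List.length_append, List.length_singleton]
    cases c
    · rw [indexStep, var_P_two_mul hs, var_P_two_mul_add_one hs]
      refine ⟨by linarith, by linarith, by linarith⟩
    · rw [indexStep, var_P_two_mul_add_one hs,
        show 2 * wordIndex w + 1 + 1 = 2 * (wordIndex w + 1) by ring, var_P_two_mul (by omega)]
      refine ⟨by linarith, by linarith, by linarith⟩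

lemma var_P_hword_le (w : List LR) : var (P (hword w)) ≤ maxVar (w.length + 2) := by
  rw [var_P_hword, maxVar_succ_succ]
  linarith [(var_P_wordIndex_le w).2.2]

lemma altWord_succ (n : ℕ) :
    altWord (n + 1) = altWord n ++ [if n % 2 = 0 then LR.L else LR.R] := by
  simp [altWord, List.range_succ]

lemma var_P_wordIndex_altWord (n : ℕ) :
    (var (P (wordIndex (altWord n))), var (P (wordIndex (altWord n) + 1)))
      = if n % 2 = 0 then (maxVar (n + 1), maxVar n) else (maxVar n, maxVar (n + 1)) := by
  induction n with
  | zero => simp [altWord, wordIndex, maxVar, var_P_one, var_P_two]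
  | succ n ih =>
    have hs := one_le_wordIndex (altWord n)
    rw [altWord_succ, wordIndex_append_singleton]
    by_cases hn : n % 2 = 0
    · simp only [hn, if_true, Prod.mk.injEq] at ih
      rw [if_pos hn, if_neg (by omega), indexStep, var_P_two_mul hs, var_P_two_mul_add_one hs,
        ih.1, ih.2, maxVar_succ_succ, add_comm (maxVar n)]
    · simp only [hn, if_false, Prod.mk.injEq] at ih
      rw [if_neg hn, if_pos (by omega), indexStep, var_P_two_mul_add_one hs,
        show 2 * wordIndex (altWord n) + 1 + 1 = 2 * (wordIndex (altWord n) + 1) by ring,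
        var_P_two_mul (by omega), ih.1, ih.2, maxVar_succ_succ]

lemma var_P_hword_altWord (n : ℕ) : var (P (hword (altWord n))) = maxVar (n + 2) := by
  have h := var_P_wordIndex_altWord n
  rw [var_P_hword, maxVar_succ_succ]
  split_ifs at h <;> simp only [Prod.mk.injEq] at h <;> rw [h.1, h.2]
  ring

/-- `D²[P_{v^n}] = 2n/3 + 8/9 + (-1)^n / (9 · 2^n)`, and the alternating word maximizes
the variance among all words of length `n`. -/
theorem variance_alternating_word (n : ℕ) :
    var (P (hword (altWord n)))
      = 2 * (n : ℝ) / 3 + 8 / 9 + (-1 : ℝ) ^ n / (9 * 2 ^ n) ∧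
    (∀ w : List LR, w.length = n → var (P (hword w)) ≤ var (P (hword (altWord n)))) := by
  refine ⟨by rw [var_P_hword_altWord, maxVar_add_two], fun w hw => ?_⟩
  rw [var_P_hword_altWord, ← hw]
  exact var_P_hword_le w
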